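/- arXiv:2502.17018 — 3 statements merged into one kernel-verified Lean document; each statement's English description precedes it below -/
import Mathlib

section
/- Let λ ∈ 𝕋^ω and r = (r_1, r_2, ...) a sequence of positive reals with r_1 ≤ 1. Then the family {(rλ)^n : n ∈ ℤ^∞, τ(n) ≥ 0} is bounded (where (rλ)^n = ∏_k (r_k λ_k)^{n_k}) if and only if log r_k / log p_k = log r_1 / log 2 for all k, i.e., r_k = p_k^{−σ} for some fixed σ ≥ 0. -/
/-- `τ(n) = ∑ₖ nₖ · log pₖ`, where `pₖ` is the `k`-th prime. -/
noncomputable def tau (n : ℕ →₀ ℤ) : ℝ :=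
  n.sum fun k m => (m : ℝ) * Real.log (Nat.nth Nat.Prime k)

/-!
Both `n ↦ log ‖(rλ)^n‖ = ∑ₖ nₖ log rₖ` and `τ` are additive functionals on `ℤ^∞`. An additive
functional `f` bounded above on the half-space `0 ≤ g` of another one must be proportional to
`g`: otherwise, pairing `a • x` with the multiple `⌊a g(x) / g(y)⌋ • y` of some `y` with
`g(y) > 0` keeps `g` in `[0, g(y))` while `f` grows linearly in `a ∈ ℤ`. Conversely, if
`log rₖ = σ log pₖ` with `σ = log r₁ / log 2 ≤ 0`, then `‖(rλ)^n‖ = exp (σ τ(n)) ≤ 1`.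
-/

theorem eq_zero_of_forall_int_mul_le {c K : ℝ} (h : ∀ a : ℤ, a * c ≤ K) : c = 0 := by
  by_contra hc
  obtain ⟨n, hn⟩ := Archimedean.arch (K + 1) (abs_pos.mpr hc)
  have hnc : |(n : ℝ) * c| ≤ K :=
    abs_le.mpr ⟨by linarith [show -((n : ℝ) * c) ≤ K by simpa using h (-n)], by simpa using h n⟩
  rw [abs_mul, Nat.abs_cast, ← nsmul_eq_mul] at hnc
  linarith

theorem AddMonoidHom.mul_eq_mul_of_bddAbove {G : Type*} [AddCommGroup G] (f g : G →+ ℝ)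
    (hf : BddAbove (f '' {x | 0 ≤ g x})) (x : G) {y : G} (hy : 0 < g y) :
    f x * g y = f y * g x := by
  obtain ⟨C, hC⟩ := hf
  suffices (f x * g y - f y * g x) / g y = 0 by
    rw [div_eq_zero_iff] at this
    exact sub_eq_zero.mp (this.resolve_right hy.ne')
  refine eq_zero_of_forall_int_mul_le (K := C + |f y|) fun a => ?_
  set t : ℝ := a * g x / g y
  have hg : g (a • x - ⌊t⌋ • y) = g y * Int.fract t := by
    rw [← Int.self_sub_floor]
    simp only [map_sub, map_zsmul, zsmul_eq_mul, t]
    field_simp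
  have hf_le : f (a • x - ⌊t⌋ • y) ≤ C :=
    hC ⟨_, by rw [Set.mem_ofPred_eq, hg]; exact mul_nonneg hy.le (Int.fract_nonneg t), rfl⟩
  have hf_eq : f (a • x - ⌊t⌋ • y) = a * ((f x * g y - f y * g x) / g y) + Int.fract t * f y := by
    rw [← Int.self_sub_floor]
    simp only [map_sub, map_zsmul, zsmul_eq_mul, t]
    field_simp
    ring
  have hfract : -|f y| ≤ Int.fract t * f y := by
    nlinarith [Int.fract_nonneg t, Int.fract_lt_one t, neg_abs_le (f y), le_abs_self (f y)]
  linarith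

theorem Finsupp.linearCombination_eq_const_mul {α : Type*} {v w : α → ℝ} {c : ℝ}
    (h : ∀ i, w i = c * v i) (n : α →₀ ℤ) :
    Finsupp.linearCombination ℤ w n = c * Finsupp.linearCombination ℤ v n := by
  simp only [Finsupp.linearCombination_apply, Finsupp.mul_sum, h, zsmul_eq_mul]
  exact Finsupp.sum_congr fun _ _ => by ring

theorem norm_prod_zpow_eq_exp (lam : ℕ → Circle) {r : ℕ → ℝ} (hr : ∀ k, 0 < r k) (n : ℕ →₀ ℤ) :
    ‖∏ k ∈ n.support, ((r k : ℂ) * (lam k : ℂ)) ^ (n k)‖ =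
      Real.exp (Finsupp.linearCombination ℤ (fun k => Real.log (r k)) n) := by
  rw [norm_prod, Finsupp.linearCombination_apply, Finsupp.sum, Real.exp_sum]
  refine Finset.prod_congr rfl fun k _ => ?_
  rw [norm_zpow, norm_mul, Complex.norm_real, Real.norm_eq_abs, Circle.norm_coe, mul_one,
    abs_of_pos (hr k), zsmul_eq_mul, ← Real.rpow_intCast, Real.rpow_def_of_pos (hr k), mul_comm]

theorem tau_eq_linearCombination (n : ℕ →₀ ℤ) :
    tau n = Finsupp.linearCombination ℤ (fun k => Real.log (Nat.nth Nat.Prime k)) n := by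
  simp only [tau, Finsupp.linearCombination_apply, zsmul_eq_mul]

theorem log_nth_prime_pos (k : ℕ) : 0 < Real.log (Nat.nth Nat.Prime k) :=
  Real.log_pos (by exact_mod_cast (Nat.prime_nth_prime k).one_lt)

/-- Indices are 0-based: `r 0` is `r₁`, and `Nat.nth Nat.Prime 0 = 2`. -/
theorem bounded_powers_iff (lam : ℕ → Circle) (r : ℕ → ℝ)
    (hr : ∀ k, 0 < r k) (hr1 : r 0 ≤ 1) :
    (∃ C : ℝ, ∀ n : ℕ →₀ ℤ, 0 ≤ tau n →
        ‖(∏ k ∈ n.support, ((r k : ℂ) * (lam k : ℂ)) ^ (n k))‖ ≤ C) ↔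
      (∀ k, Real.log (r k) / Real.log (Nat.nth Nat.Prime k) = Real.log (r 0) / Real.log 2) := by
  simp only [norm_prod_zpow_eq_exp lam hr, tau_eq_linearCombination]
  set f := Finsupp.linearCombination ℤ fun k => Real.log (r k)
  set g := Finsupp.linearCombination ℤ fun k => Real.log (Nat.nth Nat.Prime k)
  constructor
  · rintro ⟨C, hC⟩ k
    have hbdd : BddAbove (f.toAddMonoidHom '' {n | 0 ≤ g.toAddMonoidHom n}) :=
      ⟨C, Set.forall_mem_image.2 fun n hn =>
        (le_add_of_nonneg_right zero_le_one).trans ((Real.add_one_le_exp _).trans (hC n hn))⟩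
    have key := f.toAddMonoidHom.mul_eq_mul_of_bddAbove g.toAddMonoidHom hbdd
      (Finsupp.single k 1) (y := Finsupp.single 0 1) (by simpa [g] using log_nth_prime_pos 0)
    simp only [LinearMap.toAddMonoidHom_coe, f, g, Finsupp.linearCombination_single, one_smul,
      Nat.nth_prime_zero_eq_two, Nat.cast_ofNat] at key
    rw [div_eq_div_iff (log_nth_prime_pos k).ne' (Real.log_pos one_lt_two).ne', key, mul_comm]
  · intro h
    refine ⟨1, fun n hn => Real.exp_le_one_iff.mpr ?_⟩
    have hσ : Real.log (r 0) / Real.log 2 ≤ 0 :=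
      div_nonpos_of_nonpos_of_nonneg (Real.log_nonpos (hr 0).le hr1) (Real.log_nonneg one_le_two)
    rw [Finsupp.linearCombination_eq_const_mul (c := Real.log (r 0) / Real.log 2)
      (fun k => by rw [← h k, div_mul_cancel₀ _ (log_nth_prime_pos k).ne']) n]
    exact mul_nonpos_of_nonpos_of_nonneg hσ hn
end

section
/- For real numbers t_0 ≤ t_1 ≤ ... ≤ t_N and σ ≥ 0, the determinant of the matrix (e^{−σ|t_i − t_j|})_{i,j=0}^N equals e^{−σ(t_N − t_0)} · ∏_{k=0}^{N−1} (e^{σ(t_{k+1}−t_k)} − e^{−σ(t_{k+1}−t_k)}), and in particular this determinant is nonnegative. -/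
private lemma telescope_aux (N : ℕ) (t : Fin (N + 1) → ℝ) :
    ∑ k : Fin N, (t k.succ - t k.castSucc) = t (Fin.last N) - t 0 := by
  induction N with
  | zero => simp
  | succ n ih =>
    rw [Fin.sum_univ_castSucc]
    have h := ih (t ∘ Fin.castSucc)
    simp only [Function.comp] at h
    have e1 : ∀ k : Fin n, (t k.castSucc.succ - t k.castSucc.castSucc)
        = (t k.succ.castSucc - t k.castSucc.castSucc) := by
      intro k; rw [Fin.succ_castSucc]
    rw [Finset.sum_congr rfl (fun k _ => e1 k), h]
    have h2 : (Fin.last n).succ = Fin.last (n + 1) := rfl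
    have h3 : ((0 : Fin (n + 1)).castSucc) = 0 := rfl
    rw [h2, h3] at *
    ring

private lemma det_aux (N : ℕ) (σ : ℝ) : ∀ (t : Fin (N + 1) → ℝ), Monotone t →
    (Matrix.of fun i j : Fin (N + 1) => Real.exp (-σ * |t i - t j|)).det =
      ∏ k : Fin N, (1 - Real.exp (-(2 * σ) * (t k.succ - t k.castSucc))) := by
  induction N with
  | zero =>
    intro t _
    simp [Matrix.det_fin_one]
  | succ n ih =>
    intro t hmono
    set A : Matrix (Fin (n + 2)) (Fin (n + 2)) ℝ :=
      Matrix.of fun i j => Real.exp (-σ * |t i - t j|) with hA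
    set r : ℝ := Real.exp (-σ * (t 1 - t 0)) with hr
    have h01 : t 0 ≤ t 1 := hmono (by simp [Fin.le_def])
    have hB : A.det = (A.updateRow 0 (A 0 + (-r) • A 1)).det :=
      (Matrix.det_updateRow_add_smul_self A (by simp) (-r)).symm
    set B := A.updateRow 0 (A 0 + (-r) • A 1) with hBdef
    have hrow : ∀ j : Fin (n + 2), B 0 j = if j = 0 then 1 - r * r else 0 := by
      intro j
      rw [hBdef, Matrix.updateRow_self]
      by_cases hj : j = 0
      · subst hj
        simp only [Pi.add_apply, Pi.smul_apply, smul_eq_mul, if_pos rfl, hA, Matrix.of_apply]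
        rw [abs_of_nonneg (by linarith : (0:ℝ) ≤ t 1 - t 0), sub_self, abs_zero]
        simp [hr]; ring
      · have h1j : t 1 ≤ t j := hmono (by
          rw [Fin.le_def]
          have : (j : ℕ) ≠ 0 := fun h => hj (Fin.ext h)
          simp [Fin.val_one]; omega)
        have h0j : t 0 ≤ t j := le_trans h01 h1j
        simp only [Pi.add_apply, Pi.smul_apply, smul_eq_mul, if_neg hj, hA, Matrix.of_apply]
        rw [abs_sub_comm (t 0), abs_of_nonneg (by linarith : (0:ℝ) ≤ t j - t 0),
          abs_sub_comm (t 1), abs_of_nonneg (by linarith : (0:ℝ) ≤ t j - t 1), hr]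
        have he : -σ * (t j - t 0) = (-σ * (t 1 - t 0)) + (-σ * (t j - t 1)) := by ring
        rw [he, Real.exp_add]; ring
    have hsub : B.submatrix Fin.succ (Fin.succAbove 0) =
        Matrix.of fun i j : Fin (n + 1) => Real.exp (-σ * |t i.succ - t j.succ|) := by
      ext i j
      have hz : Fin.succAbove (0 : Fin (n + 2)) j = j.succ := Fin.zero_succAbove j
      rw [Matrix.submatrix_apply, hz, hBdef, Matrix.updateRow_ne (Fin.succ_ne_zero i)]
      rfl
    have hdet : B.det = (1 - r * r) *
        (Matrix.of fun i j : Fin (n + 1) => Real.exp (-σ * |t i.succ - t j.succ|)).det := by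
      rw [Matrix.det_succ_row_zero]
      rw [Finset.sum_eq_single 0]
      · rw [hrow 0, if_pos rfl, hsub]; simp
      · intro j _ hj
        rw [hrow j, if_neg hj]; ring
      · intro h; simp at h
    have hmono' : Monotone (t ∘ Fin.succ) := by
      intro a b hab
      exact hmono (Fin.succ_le_succ_iff.mpr hab)
    have hih := ih (t ∘ Fin.succ) hmono'
    simp only [Function.comp] at hih
    rw [hB, hdet, hih, Fin.prod_univ_succ]
    congr 1
    · have hrr : r * r = Real.exp (-(2 * σ) * (t (0 : Fin (n + 1)).succ -
          t (0 : Fin (n + 1)).castSucc)) := by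
        rw [hr, ← Real.exp_add]
        congr 1
        have e1 : t (0 : Fin (n + 1)).succ = t 1 := rfl
        have e0 : t ((0 : Fin (n + 1)).castSucc) = t 0 := rfl
        rw [e1, e0]; ring
      rw [hrr]

/-- For `t₀ ≤ t₁ ≤ ... ≤ t_N` and `σ ≥ 0`, `det (e^{−σ|tᵢ−tⱼ|})` equals
`e^{−σ(t_N−t₀)} · ∏ₖ (e^{σ(tₖ₊₁−tₖ)} − e^{−σ(tₖ₊₁−tₖ)})`, and in particular is nonnegative. -/
theorem det_exp_neg_abs_sub (N : ℕ) (t : Fin (N + 1) → ℝ) (hmono : Monotone t)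
    (σ : ℝ) (hσ : 0 ≤ σ) :
    (Matrix.of fun i j : Fin (N + 1) => Real.exp (-σ * |t i - t j|)).det =
        Real.exp (-σ * (t (Fin.last N) - t 0)) *
          ∏ k : Fin N, (Real.exp (σ * (t k.succ - t k.castSucc)) -
            Real.exp (-σ * (t k.succ - t k.castSucc))) ∧
      0 ≤ (Matrix.of fun i j : Fin (N + 1) => Real.exp (-σ * |t i - t j|)).det := by
  have hdet := det_aux N σ t hmono
  have hΔ : ∀ k : Fin N, 0 ≤ t k.succ - t k.castSucc := by
    intro k
    have := hmono (Fin.castSucc_le_succ k)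
    linarith
  constructor
  · rw [hdet, ← telescope_aux N t,
      show -σ * ∑ k : Fin N, (t k.succ - t k.castSucc)
        = ∑ k : Fin N, (-σ * (t k.succ - t k.castSucc)) from Finset.mul_sum _ _ _,
      Real.exp_sum, ← Finset.prod_mul_distrib]
    apply Finset.prod_congr rfl
    intro k _
    have h1 : -σ * (t k.succ - t k.castSucc) + σ * (t k.succ - t k.castSucc) = 0 := by ring
    have h2 : -σ * (t k.succ - t k.castSucc) + -σ * (t k.succ - t k.castSucc)
        = -(2 * σ) * (t k.succ - t k.castSucc) := by ring
    have he : Real.exp (-σ * (t k.succ - t k.castSucc)) *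
        (Real.exp (σ * (t k.succ - t k.castSucc)) - Real.exp (-σ * (t k.succ - t k.castSucc)))
        = 1 - Real.exp (-(2 * σ) * (t k.succ - t k.castSucc)) := by
      rw [mul_sub, ← Real.exp_add, ← Real.exp_add, h1, h2, Real.exp_zero]
    exact he.symm
  · rw [hdet]
    apply Finset.prod_nonneg
    intro k _
    have : Real.exp (-(2 * σ) * (t k.succ - t k.castSucc)) ≤ 1 := by
      rw [Real.exp_le_one_iff]
      have := hΔ k
      nlinarith
    linarith
end

section
/- Suppose f ∈ H²_τ(𝕋^ω) (i.e., f ∈ L²(𝕋^ω) with supp(f̂) ⊆ {n : τ(n) ≥ 0}) is such that there exist trigonometric polynomials p_k with supp(p̂_k) ⊆ ℤ^∞_+ (the cone with all coordinates ≥ 0) and p_k f → f̂(0)·1 in L², with f̂(0) ≠ 0 and p̂_k(0) = 1. Then supp(f̂) ⊆ ℤ^∞_+. -/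
open MeasureTheory Filter

noncomputable instance : MeasurableSpace Circle := borel Circle
instance : BorelSpace Circle := ⟨rfl⟩

/-- The character of `𝕋^ω` attached to `n ∈ ℤ^∞`. -/
noncomputable def charG (n : ℕ →₀ ℤ) (lam : ℕ → Circle) : ℂ :=
  ∏ k ∈ n.support, ((lam k : ℂ)) ^ (n k)

/-- Fourier coefficient `f̂(n)` of `f : 𝕋^ω → ℂ` w.r.t. the Haar probability measure. -/
noncomputable def coeff (μ : Measure (ℕ → Circle)) (f : (ℕ → Circle) → ℂ)
    (n : ℕ →₀ ℤ) : ℂ :=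
  ∫ lam, f lam * (starRingEnd ℂ) (charG n lam) ∂μ

/-!
Suppose `f̂(n) ≠ 0` for some `n` outside the cone `ℤ^∞₊`. Since `τ ≥ 0` on the spectrum of `f`
and `τ ≥ log 2` on the nonzero elements of the cone, we may take such an `n₀` with `τ(n₀)` within
`log 2` of the infimum of `τ` over all of them; then `f̂(n₀ - m) = 0` for every nonzero `m` in the
cone. As `q_j` has spectrum in the cone and `q̂_j(0) = 1`, the `n₀`-th coefficient of
`q_j f - f̂(0)` is therefore `f̂(n₀)` for every `j`. It is bounded by `‖q_j f - f̂(0)‖₂ → 0`.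
-/

open ComplexConjugate

lemma charG_eq_coe_prod (n : ℕ →₀ ℤ) (lam : ℕ → Circle) :
    charG n lam = ↑(n.prod fun k m => lam k ^ m) :=
  (map_prod Circle.coeHom (fun k => lam k ^ n k) n.support).symm

lemma charG_zero (lam : ℕ → Circle) : charG 0 lam = 1 := by
  simp [charG]

lemma charG_add (n m : ℕ →₀ ℤ) (lam : ℕ → Circle) :
    charG (n + m) lam = charG n lam * charG m lam := by
  simp only [charG_eq_coe_prod, ← Circle.coe_mul]
  rw [Finsupp.prod_add_index' (fun _ => zpow_zero _) (fun _ => zpow_add _)]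

lemma norm_charG (n : ℕ →₀ ℤ) (lam : ℕ → Circle) : ‖charG n lam‖ = 1 := by
  rw [charG_eq_coe_prod]
  exact Circle.norm_coe _

lemma conj_charG (n : ℕ →₀ ℤ) (lam : ℕ → Circle) : conj (charG n lam) = charG (-n) lam := by
  rw [charG_eq_coe_prod, charG_eq_coe_prod, ← Circle.coe_inv_eq_conj,
    Finsupp.prod_neg_index (fun _ => zpow_zero _)]
  simp [Finsupp.prod, zpow_neg]

lemma charG_mul_apply (n : ℕ →₀ ℤ) (t lam : ℕ → Circle) :
    charG n (t * lam) = charG n t * charG n lam := by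
  rw [charG_eq_coe_prod, charG_eq_coe_prod, charG_eq_coe_prod, ← Circle.coe_mul, ← Finsupp.prod_mul]
  exact congrArg _ (Finsupp.prod_congr fun k _ => mul_zpow (t k) (lam k) (n k))

lemma continuous_charG (n : ℕ →₀ ℤ) : Continuous (charG n) := by
  refine .congr ?_ fun lam => (charG_eq_coe_prod n lam).symm
  exact continuous_subtype_val.comp
    (continuous_finsetProd (M := Circle) _ fun k _ => (continuous_apply k).zpow _)

lemma integral_charG {μ : Measure (ℕ → Circle)} [μ.IsMulLeftInvariant] [IsProbabilityMeasure μ]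
    (n : ℕ →₀ ℤ) : ∫ lam, charG n lam ∂μ = if n = 0 then 1 else 0 := by
  split_ifs with hn
  · simp [hn, charG_zero]
  obtain ⟨k, hk⟩ : ∃ k, n k ≠ 0 := by simpa [Finsupp.ext_iff] using hn
  -- translating the `k`-th coordinate by a `2 n k`-th root of unity flips the sign of `charG n`
  refine integral_eq_zero_of_mul_left_eq_neg (g := Pi.mulSingle k (Circle.exp (Real.pi / n k)))
    fun lam => ?_
  have hroot : (Circle.exp (Real.pi / n k) : ℂ) ^ n k = -1 := by
    rw [Circle.coe_exp, ← Complex.exp_int_mul, ← Complex.exp_pi_mul_I]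
    congr 1
    push_cast
    field_simp
  rw [charG_mul_apply, charG, Finset.prod_eq_single k]
  · rw [Pi.mulSingle_eq_same, hroot, neg_one_mul]
  · intro j _ hj
    simp [hj]
  · simp [hk]

noncomputable def trigPoly (s : Finset (ℕ →₀ ℤ)) (a : (ℕ →₀ ℤ) → ℂ) (lam : ℕ → Circle) : ℂ :=
  ∑ n ∈ s, a n * charG n lam

lemma continuous_trigPoly (s : Finset (ℕ →₀ ℤ)) (a : (ℕ →₀ ℤ) → ℂ) :
    Continuous (trigPoly s a) :=
  continuous_finsetSum _ fun n _ => continuous_const.mul (continuous_charG n)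

lemma norm_trigPoly_le (s : Finset (ℕ →₀ ℤ)) (a : (ℕ →₀ ℤ) → ℂ) (lam : ℕ → Circle) :
    ‖trigPoly s a lam‖ ≤ ∑ n ∈ s, ‖a n‖ :=
  (norm_sum_le _ _).trans_eq <| Finset.sum_congr rfl fun n _ => by
    rw [norm_mul, norm_charG, mul_one]

section

variable {μ : Measure (ℕ → Circle)} {f g : (ℕ → Circle) → ℂ}

lemma MeasureTheory.Integrable.trigPoly_mul (hf : Integrable f μ) (s : Finset (ℕ →₀ ℤ))
    (a : (ℕ →₀ ℤ) → ℂ) :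
    Integrable (fun lam => trigPoly s a lam * f lam) μ :=
  hf.bdd_mul (continuous_trigPoly s a).aestronglyMeasurable
    (Eventually.of_forall (norm_trigPoly_le s a))

lemma MeasureTheory.Integrable.mul_conj_charG (hf : Integrable f μ) (n : ℕ →₀ ℤ) :
    Integrable (fun lam => f lam * conj (charG n lam)) μ :=
  hf.mul_bdd (continuous_charG n).star.aestronglyMeasurable
    (Eventually.of_forall fun lam => (RCLike.norm_conj _).trans_le (norm_charG n lam).le)

lemma coeff_sub (hf : Integrable f μ) (hg : Integrable g μ) (n : ℕ →₀ ℤ) :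
    coeff μ (fun lam => f lam - g lam) n = coeff μ f n - coeff μ g n := by
  simp only [coeff, sub_mul]
  exact integral_sub (hf.mul_conj_charG n) (hg.mul_conj_charG n)

lemma coeff_const [μ.IsMulLeftInvariant] [IsProbabilityMeasure μ] (c : ℂ) (n : ℕ →₀ ℤ) :
    coeff μ (fun _ => c) n = if n = 0 then c else 0 := by
  simp only [coeff, conj_charG, integral_const_mul, integral_charG, neg_eq_zero, mul_ite, mul_one,
    mul_zero]

lemma coeff_trigPoly_mul (hf : Integrable f μ) (s : Finset (ℕ →₀ ℤ)) (a : (ℕ →₀ ℤ) → ℂ)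
    (n : ℕ →₀ ℤ) :
    coeff μ (fun lam => trigPoly s a lam * f lam) n = ∑ m ∈ s, a m * coeff μ f (n - m) := by
  have hterm : ∀ m lam, a m * charG m lam * f lam * conj (charG n lam)
      = a m * (f lam * conj (charG (n - m) lam)) := fun m lam => by
    rw [conj_charG, conj_charG, neg_sub, sub_eq_add_neg, charG_add]
    ring
  simp only [coeff, trigPoly, Finset.sum_mul, hterm]
  rw [integral_finsetSum _ fun m _ => (hf.mul_conj_charG _).const_mul _]
  simp only [integral_const_mul]

lemma coeff_trigPoly_mul_of_vanishing [μ.IsMulLeftInvariant] [IsProbabilityMeasure μ]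
    (hf : Integrable f μ) (s : Finset (ℕ →₀ ℤ)) (a : (ℕ →₀ ℤ) → ℂ) {n : ℕ →₀ ℤ}
    (hvanish : ∀ m ∈ s, m ≠ 0 → coeff μ f (n - m) = 0) :
    coeff μ (fun lam => trigPoly s a lam * f lam) n = coeff μ (trigPoly s a) 0 * coeff μ f n := by
  have hconst := coeff_trigPoly_mul (integrable_const (1 : ℂ)) s a 0 (μ := μ)
  simp only [mul_one, coeff_const, zero_sub, neg_eq_zero] at hconst
  rw [coeff_trigPoly_mul hf, hconst, Finset.sum_mul]
  refine Finset.sum_congr rfl fun m hm => ?_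
  by_cases hm0 : m = 0
  · simp [hm0]
  · simp [hm0, hvanish m hm hm0]

lemma enorm_coeff_le_eLpNorm [IsProbabilityMeasure μ] (hf : AEStronglyMeasurable f μ)
    {p : ENNReal} (hp : 1 ≤ p) (n : ℕ →₀ ℤ) : ‖coeff μ f n‖ₑ ≤ eLpNorm f p μ :=
  calc ‖coeff μ f n‖ₑ ≤ ∫⁻ lam, ‖f lam * conj (charG n lam)‖ₑ ∂μ :=
        enorm_integral_le_lintegral_enorm _
    _ = eLpNorm f 1 μ := by
        rw [eLpNorm_one_eq_lintegral_enorm]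
        refine lintegral_congr fun lam => ?_
        rw [enorm_mul, ← ofReal_norm (conj _), RCLike.norm_conj, norm_charG, ENNReal.ofReal_one,
          mul_one]
    _ ≤ eLpNorm f p μ := eLpNorm_le_eLpNorm_of_exponent_le hp hf

end

lemma tau_add (n m : ℕ →₀ ℤ) : tau (n + m) = tau n + tau m :=
  Finsupp.sum_add_index' (fun _ => by simp) fun _ _ _ => by push_cast; ring

lemma tau_sub (n m : ℕ →₀ ℤ) : tau (n - m) = tau n - tau m := by
  rw [eq_sub_iff_add_eq, ← tau_add, sub_add_cancel]

lemma log_two_le_tau {m : ℕ →₀ ℤ} (hm : 0 ≤ m) (hm0 : m ≠ 0) : Real.log 2 ≤ tau m := by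
  have hlog (k : ℕ) : Real.log 2 ≤ Real.log (Nat.nth Nat.Prime k) :=
    Real.log_le_log two_pos (mod_cast (Nat.prime_nth_prime k).two_le)
  have hterm (k : ℕ) : 0 ≤ (m k : ℝ) * Real.log (Nat.nth Nat.Prime k) :=
    mul_nonneg (mod_cast hm k) ((Real.log_pos one_lt_two).le.trans (hlog k))
  obtain ⟨k, hk⟩ : ∃ k, m k ≠ 0 := by simpa [Finsupp.ext_iff] using hm0
  calc Real.log 2 ≤ (m k : ℝ) * Real.log (Nat.nth Nat.Prime k) := by
        have : (1 : ℝ) ≤ m k := mod_cast (hm k).lt_of_ne' hk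
        nlinarith [hlog k, Real.log_pos one_lt_two]
    _ ≤ tau m := Finset.single_le_sum (fun k _ => hterm k) (Finsupp.mem_support_iff.2 hk)

lemma exists_mem_forall_sub_notMem {S : Set (ℕ →₀ ℤ)} (hS : S.Nonempty)
    (hbdd : BddBelow (tau '' S)) : ∃ n₀ ∈ S, ∀ m, 0 ≤ m → m ≠ 0 → n₀ - m ∉ S := by
  obtain ⟨_, ⟨n₀, hn₀, rfl⟩, hlt⟩ := Real.lt_sInf_add_pos (hS.image tau) (Real.log_pos one_lt_two)
  refine ⟨n₀, hn₀, fun m hm hm0 hmem => ?_⟩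
  have := csInf_le hbdd (Set.mem_image_of_mem tau hmem)
  linarith [tau_sub n₀ m, log_two_le_tau hm hm0]

theorem support_in_positive_cone_general
    (μ : Measure (ℕ → Circle)) [μ.IsHaarMeasure] [IsProbabilityMeasure μ]
    (f : (ℕ → Circle) → ℂ) (hf : MemLp f 2 μ)
    (hsupp : ∀ n : ℕ →₀ ℤ, tau n < 0 → coeff μ f n = 0)
    (q : ℕ → (ℕ → Circle) → ℂ)
    (hq : ∀ j, ∃ (s : Finset (ℕ →₀ ℤ)) (a : (ℕ →₀ ℤ) → ℂ),
      (∀ n ∈ s, ∀ k, 0 ≤ n k) ∧ q j = fun lam => ∑ n ∈ s, a n * charG n lam)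
    (hq0 : ∀ j, coeff μ (q j) 0 = 1)
    (hconv : Tendsto
      (fun j => eLpNorm (fun lam => q j lam * f lam - coeff μ f 0) 2 μ) atTop (nhds 0)) :
    ∀ n : ℕ →₀ ℤ, coeff μ f n ≠ 0 → ∀ k, 0 ≤ n k := by
  intro n hn
  show 0 ≤ n
  by_contra hneg
  obtain ⟨n₀, ⟨hn₀, hn₀neg⟩, hmin⟩ :=
    exists_mem_forall_sub_notMem (S := {n | coeff μ f n ≠ 0 ∧ ¬0 ≤ n}) ⟨n, hn, hneg⟩
      ⟨0, fun _ ⟨m, hm, hτ⟩ => hτ ▸ not_lt.1 fun h => hm.1 (hsupp m h)⟩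
  have hvanish (m : ℕ →₀ ℤ) (hm : 0 ≤ m) (hm0 : m ≠ 0) : coeff μ f (n₀ - m) = 0 :=
    not_not.1 fun h => hmin m hm hm0 ⟨h, fun h' => hn₀neg (h'.trans (sub_le_self _ hm))⟩
  have hfi : Integrable f μ := hf.integrable one_le_two
  have hbound (j : ℕ) :
      ‖coeff μ f n₀‖ₑ ≤ eLpNorm (fun lam => q j lam * f lam - coeff μ f 0) 2 μ := by
    obtain ⟨s, a, hs, hqj⟩ := hq j
    change q j = trigPoly s a at hqj
    have hcoeff : coeff μ (fun lam => q j lam * f lam - coeff μ f 0) n₀ = coeff μ f n₀ := by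
      rw [hqj, coeff_sub (hfi.trigPoly_mul s a) (integrable_const _), coeff_const,
        if_neg (by rintro rfl; exact hn₀neg le_rfl), sub_zero,
        coeff_trigPoly_mul_of_vanishing hfi s a fun m hm hm0 => hvanish m (hs m hm) hm0,
        ← hqj, hq0 j, one_mul]
    have hq_cont : Continuous (q j) := hqj ▸ continuous_trigPoly s a
    rw [← hcoeff]
    exact enorm_coeff_le_eLpNorm
      ((hq_cont.aestronglyMeasurable.mul hf.1).sub aestronglyMeasurable_const) one_le_two n₀
  exact hn₀ (enorm_eq_zero.1 (le_zero_iff.1 (ge_of_tendsto' hconv hbound)))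

/-- If `f ∈ H²_τ(𝕋^ω)` admits trigonometric polynomials `q_j` with spectrum in the cone
`ℤ^∞₊`, `q̂_j(0) = 1`, such that `q_j f → f̂(0)·1` in `L²`, and `f̂(0) ≠ 0`, then
`supp f̂ ⊆ ℤ^∞₊`. -/
theorem support_in_positive_cone
    (μ : Measure (ℕ → Circle)) [μ.IsHaarMeasure] [IsProbabilityMeasure μ]
    (f : (ℕ → Circle) → ℂ) (hf : MemLp f 2 μ)
    (hsupp : ∀ n : ℕ →₀ ℤ, tau n < 0 → coeff μ f n = 0)
    (h0 : coeff μ f 0 ≠ 0)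
    (q : ℕ → (ℕ → Circle) → ℂ)
    (hq : ∀ j, ∃ (s : Finset (ℕ →₀ ℤ)) (a : (ℕ →₀ ℤ) → ℂ),
      (∀ n ∈ s, ∀ k, 0 ≤ n k) ∧ q j = fun lam => ∑ n ∈ s, a n * charG n lam)
    (hq0 : ∀ j, coeff μ (q j) 0 = 1)
    (hconv : Tendsto
      (fun j => eLpNorm (fun lam => q j lam * f lam - coeff μ f 0) 2 μ) atTop (nhds 0)) :
    ∀ n : ℕ →₀ ℤ, coeff μ f n ≠ 0 → ∀ k, 0 ≤ n k :=
  support_in_positive_cone_general μ f hf hsupp q hq hq0 hconv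
end
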